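/- Let A, B be algebras in a variety, let (e⃗, f⃗) be a complementary pair of central elements of A witnessed by congruences θ = Cg^A(0⃗,e⃗) and θ* = Cg^A(0⃗,f⃗), and let g : A → B be a homomorphism such that (g(e⃗), g(f⃗)) is a complementary pair of central elements of B witnessed by Cg^B(0⃗,g(e⃗)) and Cg^B(0⃗,g(f⃗)). Then the two pushout squares of the quotient maps A → A/θ and A → A/θ* along g exhibit B as the product of the two pushout objects: B ≅ B/Cg^B(0⃗,g(e⃗)) × B/Cg^B(0⃗,g(f⃗)), and the pushout objects are isomorphic to these quotients. -/

import Mathlib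

/-- A similarity type (signature) of algebras. -/
structure Sgn where
  ops : Type
  arity : ops → ℕ

/-- An algebra of signature `σ` on carrier `A`. -/
class MAlg (σ : Sgn) (A : Type) where
  app : ∀ o : σ.ops, (Fin (σ.arity o) → A) → A

/-- Homomorphisms of `σ`-algebras. -/
structure MHom (σ : Sgn) (A B : Type) [MAlg σ A] [MAlg σ B] where
  toFun : A → B
  map_app : ∀ (o : σ.ops) (x : Fin (σ.arity o) → A),
    toFun (MAlg.app o x) = MAlg.app o (fun i => toFun (x i))

/-- `r` is a congruence of the `σ`-algebra `A`. -/
def IsCong (σ : Sgn) (A : Type) [MAlg σ A] (r : A → A → Prop) : Prop :=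
  Equivalence r ∧ ∀ (o : σ.ops) (x y : Fin (σ.arity o) → A),
    (∀ i, r (x i) (y i)) → r (MAlg.app o x) (MAlg.app o y)

/-- The congruence of `A` generated by a set `S` of pairs. -/
def cgen (σ : Sgn) (A : Type) [MAlg σ A] (S : Set (A × A)) : A → A → Prop :=
  fun a b => ∀ r : A → A → Prop, IsCong σ A r → (∀ p ∈ S, r p.1 p.2) → r a b

/-- The congruence generated by the pairs `(a i, b i)`. -/
abbrev cgenP (σ : Sgn) (A : Type) [MAlg σ A] {k : ℕ} (a b : Fin k → A) : A → A → Prop :=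
  cgen σ A {p | ∃ i, p = (a i, b i)}

theorem cgen_isCong (σ : Sgn) (A : Type) [MAlg σ A] (S : Set (A × A)) :
    IsCong σ A (cgen σ A S) := by
  constructor
  · constructor
    · intro a r hr _; exact hr.1.refl a
    · intro a b h r hr hS; exact hr.1.symm (h r hr hS)
    · intro a b c h1 h2 r hr hS; exact hr.1.trans (h1 r hr hS) (h2 r hr hS)
  · intro o x y h r hr hS
    exact hr.2 o x y (fun i => h i r hr hS)

/-- The setoid attached to a congruence. -/
def conStd {σ : Sgn} {A : Type} [MAlg σ A] (r : A → A → Prop) (h : IsCong σ A r) :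
    Setoid A := ⟨r, h.1⟩

/-- The quotient of an algebra by a congruence. -/
abbrev QuotC {σ : Sgn} {A : Type} [MAlg σ A] (r : A → A → Prop) (h : IsCong σ A r) : Type :=
  Quotient (conStd r h)

noncomputable instance {σ : Sgn} {A : Type} [MAlg σ A] {r : A → A → Prop} {h : IsCong σ A r} :
    MAlg σ (QuotC r h) :=
  ⟨fun o x => Quotient.mk (conStd r h) (MAlg.app o (fun i => (x i).out))⟩

/-- The canonical quotient homomorphism. -/
noncomputable def qmap {σ : Sgn} {A : Type} [MAlg σ A] (r : A → A → Prop) (h : IsCong σ A r) :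
    MHom σ A (QuotC r h) where
  toFun a := Quotient.mk (conStd r h) a
  map_app o x := by
    apply Quotient.sound
    exact h.2 o x (fun i => (Quotient.mk (conStd r h) (x i)).out)
      (fun i => (conStd r h).symm (Quotient.mk_out (s := conStd r h) (x i)))

/-- The product algebra. -/
instance {σ : Sgn} {A B : Type} [MAlg σ A] [MAlg σ B] : MAlg σ (A × B) :=
  ⟨fun o x => (MAlg.app o (fun i => (x i).1), MAlg.app o (fun i => (x i).2))⟩

/-- Composition of homomorphisms. -/
def MHom.comp {σ : Sgn} {A B C : Type} [MAlg σ A] [MAlg σ B] [MAlg σ C]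
    (g : MHom σ B C) (f : MHom σ A B) : MHom σ A C where
  toFun := g.toFun ∘ f.toFun
  map_app o x := by simp [Function.comp, f.map_app, g.map_app]

/- The pushout of `A → A/Cg(a⃗,b⃗)` along `g : A → B` is `B → B/Cg(g a⃗, g b⃗)`: a cocone `(u, v)`
forces `v` to identify the generating pairs `(g aᵢ, g bᵢ)`, so `v` factors through the quotient,
and uniquely so since the quotient map is onto. With `a⃗ = 0⃗` and `b⃗` equal to `e⃗` or `f⃗` this gives
the two pushout squares; the product decomposition of `B` is the Chinese remainder argument for a
pair of complementary factor congruences `θ ∩ θ* = Δ`, `θ ∘ θ* = ∇`. -/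

section Pushout

variable {σ : Sgn} {A B C P : Type} [MAlg σ A] [MAlg σ B] [MAlg σ C] [MAlg σ P]

@[ext]
theorem MHom.ext {f f' : MHom σ A B} (h : f.toFun = f'.toFun) : f = f' := by
  cases f; cases f'; cases h; rfl

theorem MHom.isCong_ker (v : MHom σ A B) : IsCong σ A (fun x y => v.toFun x = v.toFun y) := by
  refine ⟨⟨fun _ => rfl, Eq.symm, Eq.trans⟩, fun o x y h => ?_⟩
  simp only [v.map_app, funext h]

theorem cgen_le {S : Set (A × A)} {r : A → A → Prop} (hr : IsCong σ A r)
    (hS : ∀ p ∈ S, r p.1 p.2) {x y : A} (h : cgen σ A S x y) : r x y :=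
  h r hr hS

theorem cgenP_apply {k : ℕ} (a b : Fin k → A) (i : Fin k) : cgenP σ A a b (a i) (b i) :=
  fun _ _ hS => hS (a i, b i) ⟨i, rfl⟩

def MHom.liftQuot {r : A → A → Prop} (hr : IsCong σ A r) (v : MHom σ A B)
    (hv : ∀ x y, r x y → v.toFun x = v.toFun y) : MHom σ (QuotC r hr) B where
  toFun := Quotient.lift v.toFun hv
  map_app o x := by
    show v.toFun _ = _
    rw [v.map_app]
    congr 1
    funext i
    exact congrArg (Quotient.lift v.toFun hv) (Quotient.out_eq (x i))

theorem MHom.ext_quot {r : A → A → Prop} {hr : IsCong σ A r} {w w' : MHom σ (QuotC r hr) B}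
    (h : ∀ x, w.toFun ((qmap r hr).toFun x) = w'.toFun ((qmap r hr).toFun x)) : w = w' := by
  ext q
  induction q using Quotient.ind
  exact h _

/-- The universal property of the square `ψ ∘ f = k ∘ g`; its commutativity is assumed separately. -/
def IsPushout (f : MHom σ A B) (g : MHom σ A C) (ψ : MHom σ B P) (k : MHom σ C P) : Prop :=
  ∀ (D : Type) [MAlg σ D] (u : MHom σ B D) (v : MHom σ C D),
    (∀ a, u.toFun (f.toFun a) = v.toFun (g.toFun a)) →
    ∃! w : MHom σ P D, (∀ q, w.toFun (ψ.toFun q) = u.toFun q) ∧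
      (∀ x, w.toFun (k.toFun x) = v.toFun x)

theorem isPushout_qmap_cgenP (g : MHom σ A B) {k : ℕ} (a b : Fin k → A) (a' b' : Fin k → B)
    (ha : ∀ i, a' i = g.toFun (a i)) (hb : ∀ i, b' i = g.toFun (b i))
    (ψ : MHom σ (QuotC (cgenP σ A a b) (cgen_isCong σ A _))
      (QuotC (cgenP σ B a' b') (cgen_isCong σ B _)))
    (hψ : ∀ x, ψ.toFun ((qmap _ (cgen_isCong σ A _)).toFun x) =
      (qmap _ (cgen_isCong σ B _)).toFun (g.toFun x)) :
    IsPushout (qmap _ (cgen_isCong σ A _)) g ψ (qmap _ (cgen_isCong σ B _)) := by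
  intro D _ u v huv
  have hv : ∀ x y, cgenP σ B a' b' x y → v.toFun x = v.toFun y := by
    refine fun x y => cgen_le v.isCong_ker ?_
    rintro _ ⟨i, rfl⟩
    calc v.toFun (a' i) = u.toFun ((qmap _ (cgen_isCong σ A _)).toFun (a i)) := by
          rw [ha, huv]
      _ = u.toFun ((qmap _ (cgen_isCong σ A _)).toFun (b i)) :=
          congrArg u.toFun (Quotient.sound (cgenP_apply a b i))
      _ = v.toFun (b' i) := by rw [hb, huv]
  refine ⟨MHom.liftQuot _ v hv, ⟨fun q => ?_, fun _ => rfl⟩, ?_⟩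
  · induction q using Quotient.ind
    exact (congrArg (MHom.liftQuot _ v hv).toFun (hψ _)).trans (huv _).symm
  · rintro w ⟨-, hw⟩
    exact MHom.ext_quot hw

end Pushout

theorem Quotient.mk_prod_bijective {α : Type*} {s t : Setoid α}
    (hinter : ∀ x y, s x y → t x y → x = y) (hcomp : ∀ x y, ∃ c, s x c ∧ t c y) :
    Function.Bijective fun x => (Quotient.mk s x, Quotient.mk t x) := by
  refine ⟨fun x y h => hinter x y (Quotient.exact (Prod.ext_iff.1 h).1)
    (Quotient.exact (Prod.ext_iff.1 h).2), ?_⟩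
  rintro ⟨p, q⟩
  induction p, q using Quotient.inductionOn₂ with
  | h x y =>
    obtain ⟨c, hxc, hcy⟩ := hcomp x y
    exact ⟨c, Prod.ext (Quotient.sound (s.symm hxc)) (Quotient.sound hcy)⟩

theorem stmt19_general (σ : Sgn) (N : ℕ)
    (zero : ∀ (A : Type) [MAlg σ A], Fin N → A)
    (hz : ∀ (A B : Type) [MAlg σ A] [MAlg σ B] (h : MHom σ A B) (i : Fin N),
      h.toFun (zero A i) = zero B i)
    (A B : Type) [MAlg σ A] [MAlg σ B] (g : MHom σ A B) (e f : Fin N → A)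
    -- and likewise for the images in `B`:
    (hB1 : ∀ x y : B, (cgenP σ B (zero B) (fun k => g.toFun (e k)) x y ∧
        cgenP σ B (zero B) (fun k => g.toFun (f k)) x y) ↔ x = y)
    (hB2 : ∀ x y : B, ∃ c : B, cgenP σ B (zero B) (fun k => g.toFun (e k)) x c ∧
        cgenP σ B (zero B) (fun k => g.toFun (f k)) c y) :
    -- the square over `e⃗` is a pushout:
    (∀ ψ : MHom σ (QuotC (cgenP σ A (zero A) e) (cgen_isCong σ A _))
        (QuotC (cgenP σ B (zero B) (fun k => g.toFun (e k))) (cgen_isCong σ B _)),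
      (∀ a : A, ψ.toFun ((qmap (cgenP σ A (zero A) e) (cgen_isCong σ A _)).toFun a) =
        (qmap (cgenP σ B (zero B) (fun k => g.toFun (e k)))
          (cgen_isCong σ B _)).toFun (g.toFun a)) →
      ∀ (D : Type) (iD : MAlg σ D)
        (u : @MHom σ (QuotC (cgenP σ A (zero A) e) (cgen_isCong σ A _)) D _ iD)
        (v : @MHom σ B D _ iD),
        (∀ a : A, u.toFun ((qmap (cgenP σ A (zero A) e) (cgen_isCong σ A _)).toFun a) =
            v.toFun (g.toFun a)) →
        ∃! w : @MHom σ (QuotC (cgenP σ B (zero B) (fun k => g.toFun (e k)))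
            (cgen_isCong σ B _)) D _ iD,
          (∀ q, w.toFun (ψ.toFun q) = u.toFun q) ∧
          (∀ x : B, w.toFun ((qmap (cgenP σ B (zero B) (fun k => g.toFun (e k)))
              (cgen_isCong σ B _)).toFun x) = v.toFun x)) ∧
    -- the square over `f⃗` is a pushout:
    (∀ ψ : MHom σ (QuotC (cgenP σ A (zero A) f) (cgen_isCong σ A _))
        (QuotC (cgenP σ B (zero B) (fun k => g.toFun (f k))) (cgen_isCong σ B _)),
      (∀ a : A, ψ.toFun ((qmap (cgenP σ A (zero A) f) (cgen_isCong σ A _)).toFun a) =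
        (qmap (cgenP σ B (zero B) (fun k => g.toFun (f k)))
          (cgen_isCong σ B _)).toFun (g.toFun a)) →
      ∀ (D : Type) (iD : MAlg σ D)
        (u : @MHom σ (QuotC (cgenP σ A (zero A) f) (cgen_isCong σ A _)) D _ iD)
        (v : @MHom σ B D _ iD),
        (∀ a : A, u.toFun ((qmap (cgenP σ A (zero A) f) (cgen_isCong σ A _)).toFun a) =
            v.toFun (g.toFun a)) →
        ∃! w : @MHom σ (QuotC (cgenP σ B (zero B) (fun k => g.toFun (f k)))
            (cgen_isCong σ B _)) D _ iD,
          (∀ q, w.toFun (ψ.toFun q) = u.toFun q) ∧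
          (∀ x : B, w.toFun ((qmap (cgenP σ B (zero B) (fun k => g.toFun (f k)))
              (cgen_isCong σ B _)).toFun x) = v.toFun x)) ∧
    -- `B` is the product of the two quotients:
    Function.Bijective (fun x : B =>
      ((qmap (cgenP σ B (zero B) (fun k => g.toFun (e k))) (cgen_isCong σ B _)).toFun x,
       (qmap (cgenP σ B (zero B) (fun k => g.toFun (f k))) (cgen_isCong σ B _)).toFun x)) := by
  refine ⟨fun ψ hψ => ?_, fun ψ hψ => ?_, ?_⟩
  · exact isPushout_qmap_cgenP g _ e _ _ (fun i => (hz A B g i).symm) (fun _ => rfl) ψ hψ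
  · exact isPushout_qmap_cgenP g _ f _ _ (fun i => (hz A B g i).symm) (fun _ => rfl) ψ hψ
  · exact Quotient.mk_prod_bijective (fun x y hx hy => (hB1 x y).1 ⟨hx, hy⟩) hB2

/-- if `(e⃗,f⃗)` is a complementary pair of central elements of `A` witnessed
by the complementary factor congruences `Cg(0⃗,e⃗)`, `Cg(0⃗,f⃗)`, and `g : A → B` is a
homomorphism such that `(g e⃗, g f⃗)` is likewise witnessed in `B`, then the two pushout
squares of the quotient maps along `g` exhibit `B` as the product of the two pushout
objects: the pushout of `A → A/Cg(0⃗,e⃗)` along `g` is `B → B/Cg(0⃗,g e⃗)` (and similarly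
for `f⃗`), and the canonical map `B → B/Cg(0⃗,g e⃗) × B/Cg(0⃗,g f⃗)` is an isomorphism. -/
theorem stmt19 (σ : Sgn) (N : ℕ)
    (zero one : ∀ (A : Type) [MAlg σ A], Fin N → A)
    (hz : ∀ (A B : Type) [MAlg σ A] [MAlg σ B] (h : MHom σ A B) (i : Fin N),
      h.toFun (zero A i) = zero B i)
    (ho : ∀ (A B : Type) [MAlg σ A] [MAlg σ B] (h : MHom σ A B) (i : Fin N),
      h.toFun (one A i) = one B i)
    (A B : Type) [MAlg σ A] [MAlg σ B] (g : MHom σ A B) (e f : Fin N → A)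
    -- `Cg(0⃗,e⃗)` and `Cg(0⃗,f⃗)` are a complementary pair of factor congruences of `A`:
    (hA1 : ∀ x y : A, (cgenP σ A (zero A) e x y ∧ cgenP σ A (zero A) f x y) ↔ x = y)
    (hA2 : ∀ x y : A, ∃ c : A, cgenP σ A (zero A) e x c ∧ cgenP σ A (zero A) f c y)
    -- and likewise for the images in `B`:
    (hB1 : ∀ x y : B, (cgenP σ B (zero B) (fun k => g.toFun (e k)) x y ∧
        cgenP σ B (zero B) (fun k => g.toFun (f k)) x y) ↔ x = y)
    (hB2 : ∀ x y : B, ∃ c : B, cgenP σ B (zero B) (fun k => g.toFun (e k)) x c ∧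
        cgenP σ B (zero B) (fun k => g.toFun (f k)) c y) :
    -- the square over `e⃗` is a pushout:
    (∀ ψ : MHom σ (QuotC (cgenP σ A (zero A) e) (cgen_isCong σ A _))
        (QuotC (cgenP σ B (zero B) (fun k => g.toFun (e k))) (cgen_isCong σ B _)),
      (∀ a : A, ψ.toFun ((qmap (cgenP σ A (zero A) e) (cgen_isCong σ A _)).toFun a) =
        (qmap (cgenP σ B (zero B) (fun k => g.toFun (e k)))
          (cgen_isCong σ B _)).toFun (g.toFun a)) →
      ∀ (D : Type) (iD : MAlg σ D)
        (u : @MHom σ (QuotC (cgenP σ A (zero A) e) (cgen_isCong σ A _)) D _ iD)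
        (v : @MHom σ B D _ iD),
        (∀ a : A, u.toFun ((qmap (cgenP σ A (zero A) e) (cgen_isCong σ A _)).toFun a) =
            v.toFun (g.toFun a)) →
        ∃! w : @MHom σ (QuotC (cgenP σ B (zero B) (fun k => g.toFun (e k)))
            (cgen_isCong σ B _)) D _ iD,
          (∀ q, w.toFun (ψ.toFun q) = u.toFun q) ∧
          (∀ x : B, w.toFun ((qmap (cgenP σ B (zero B) (fun k => g.toFun (e k)))
              (cgen_isCong σ B _)).toFun x) = v.toFun x)) ∧
    -- the square over `f⃗` is a pushout:
    (∀ ψ : MHom σ (QuotC (cgenP σ A (zero A) f) (cgen_isCong σ A _))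
        (QuotC (cgenP σ B (zero B) (fun k => g.toFun (f k))) (cgen_isCong σ B _)),
      (∀ a : A, ψ.toFun ((qmap (cgenP σ A (zero A) f) (cgen_isCong σ A _)).toFun a) =
        (qmap (cgenP σ B (zero B) (fun k => g.toFun (f k)))
          (cgen_isCong σ B _)).toFun (g.toFun a)) →
      ∀ (D : Type) (iD : MAlg σ D)
        (u : @MHom σ (QuotC (cgenP σ A (zero A) f) (cgen_isCong σ A _)) D _ iD)
        (v : @MHom σ B D _ iD),
        (∀ a : A, u.toFun ((qmap (cgenP σ A (zero A) f) (cgen_isCong σ A _)).toFun a) =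
            v.toFun (g.toFun a)) →
        ∃! w : @MHom σ (QuotC (cgenP σ B (zero B) (fun k => g.toFun (f k)))
            (cgen_isCong σ B _)) D _ iD,
          (∀ q, w.toFun (ψ.toFun q) = u.toFun q) ∧
          (∀ x : B, w.toFun ((qmap (cgenP σ B (zero B) (fun k => g.toFun (f k)))
              (cgen_isCong σ B _)).toFun x) = v.toFun x)) ∧
    -- `B` is the product of the two quotients:
    Function.Bijective (fun x : B =>
      ((qmap (cgenP σ B (zero B) (fun k => g.toFun (e k))) (cgen_isCong σ B _)).toFun x,
       (qmap (cgenP σ B (zero B) (fun k => g.toFun (f k))) (cgen_isCong σ B _)).toFun x)) :=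
  stmt19_general σ N zero hz A B g e f hB1 hB2
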